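/- arXiv:1805.04135 — 2 statements merged into one kernel-verified Lean document; each statement's English description precedes it below -/
import Mathlib

section
/- Let d ≥ 1 be an integer, α ∈ (0,2) and K > 0. Then there exists a constant C > 0 such that for every l ≥ 1 and every function f : ℝ^d → [0,1] satisfying f(x) = 0 for all |x| ≥ 2l and |f(x) − f(y)| ≤ (K/l)|x − y| for all x, y ∈ ℝ^d, one has D(f,f) ≤ C·l^{d−α}. -/
open MeasureTheory

/-- The fractional Dirichlet energy
`D(f,f) = ∫∫ (f(x) − f(y))² / |x − y|^{d+α} dx dy` on `ℝ^d`. -/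
noncomputable def fracD (d : ℕ) (α : ℝ) (f : EuclideanSpace ℝ (Fin d) → ℝ) : ℝ :=
  ∫ x, ∫ y, (f x - f y) ^ 2 / ‖x - y‖ ^ ((d : ℝ) + α)

/-!
Rescaling `f ↦ f (l • ·)` multiplies the energy by `l ^ (d - α)` and reduces the hypotheses to
the case `l = 1`, so it suffices to bound the energy uniformly over `K`-Lipschitz functions with
values in `[0, 1]` vanishing outside the ball of radius `2`. For such `f` the inner integral at
any `x` is at most `∫ min (K² ‖z‖², 1) ‖z‖^(-d-α) dz`, finite because `0 < α < 2`; for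
`‖x‖ ≥ 4` it is also at most `|B₂| 2^(d+α) ‖x‖^(-d-α)`, integrable at infinity because `α > 0`.
-/

open Metric Set Module

lemma sq_sub_le_one_of_mem_Icc {a b : ℝ} (ha : a ∈ Icc (0 : ℝ) 1) (hb : b ∈ Icc (0 : ℝ) 1) :
    (a - b) ^ 2 ≤ 1 := by
  rw [← sq_abs]
  exact pow_le_one₀ (abs_nonneg _) (abs_sub_le_of_nonneg_of_le ha.1 ha.2 hb.1 hb.2)

section Kernel

variable {E : Type*} [NormedAddCommGroup E]

noncomputable def energyKernel (K β : ℝ) (z : E) : ℝ := min (K ^ 2 * ‖z‖ ^ 2) 1 * ‖z‖ ^ (-β)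

lemma energyKernel_nonneg (K β : ℝ) (z : E) : 0 ≤ energyKernel K β z :=
  mul_nonneg (le_min (by positivity) zero_le_one) (by positivity)

variable {f : E → ℝ}

lemma sq_sub_div_norm_rpow_le_energyKernel {K : ℝ} (h01 : ∀ x, f x ∈ Icc (0 : ℝ) 1)
    (hLip : ∀ x y, |f x - f y| ≤ K * ‖x - y‖) (β : ℝ) (x y : E) :
    (f x - f y) ^ 2 / ‖x - y‖ ^ β ≤ energyKernel K β (y - x) := by
  have hsq : (f x - f y) ^ 2 ≤ min (K ^ 2 * ‖y - x‖ ^ 2) 1 := by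
    refine le_min ?_ (sq_sub_le_one_of_mem_Icc (h01 x) (h01 y))
    rw [norm_sub_rev, ← mul_pow, ← sq_abs]
    exact pow_le_pow_left₀ (abs_nonneg _) (hLip x y) 2
  rw [div_eq_mul_inv, ← Real.rpow_neg (norm_nonneg _), norm_sub_rev]
  exact mul_le_mul_of_nonneg_right hsq (by positivity)

lemma sq_sub_div_norm_rpow_le_indicator_of_far {R β : ℝ} (h01 : ∀ x, f x ∈ Icc (0 : ℝ) 1)
    (hsupp : ∀ x, R ≤ ‖x‖ → f x = 0) (hR : 0 < R) (hβ : 0 ≤ β) {x : E} (hx : 2 * R ≤ ‖x‖)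
    (y : E) :
    (f x - f y) ^ 2 / ‖x - y‖ ^ β ≤
      (closedBall 0 R).indicator (fun _ => 2 ^ β * ‖x‖ ^ (-β)) y := by
  have hfx : f x = 0 := hsupp x (by linarith)
  by_cases hy : ‖y‖ ≤ R
  · rw [indicator_of_mem (mem_closedBall_zero_iff.2 hy)]
    have hx2 : 0 < ‖x‖ / 2 := by linarith
    have hdist : ‖x‖ / 2 ≤ ‖x - y‖ := by linarith [norm_sub_norm_le x y]
    calc (f x - f y) ^ 2 / ‖x - y‖ ^ β ≤ 1 / ‖x - y‖ ^ β := by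
          gcongr; exact sq_sub_le_one_of_mem_Icc (h01 x) (h01 y)
      _ ≤ 1 / (‖x‖ / 2) ^ β := by gcongr
      _ = 2 ^ β * ‖x‖ ^ (-β) := by
          rw [Real.div_rpow (norm_nonneg x) zero_le_two, Real.rpow_neg (norm_nonneg x)]
          field_simp
  · rw [indicator_of_notMem (by simpa using hy), hfx, hsupp y (by linarith)]
    simp

end Kernel

section HaarMeasure

variable {E : Type*} [NormedAddCommGroup E] [NormedSpace ℝ E] [FiniteDimensional ℝ E]
  [MeasurableSpace E] [BorelSpace E] (μ : Measure E) [μ.IsAddHaarMeasure]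

lemma integrableOn_norm_rpow_neg_compl_closedBall [Nontrivial E] {s r : ℝ}
    (hs : finrank ℝ E < s) (hr : 0 < r) :
    IntegrableOn (fun x : E => ‖x‖ ^ (-s)) (closedBall 0 r)ᶜ μ := by
  have hd : 1 ≤ finrank ℝ E := finrank_pos
  have hradial : (closedBall (0 : E) r)ᶜ.indicator (fun x => ‖x‖ ^ (-s)) =
      fun x => (Ioi r).indicator (fun t => t ^ (-s)) ‖x‖ := by
    ext x
    simp [indicator, mem_closedBall, dist_zero_right, not_le]
  rw [← integrable_indicator_iff measurableSet_closedBall.compl, hradial,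
    integrable_fun_norm_addHaar μ]
  have hpow : IntegrableOn (fun t : ℝ => t ^ ((finrank ℝ E : ℝ) - 1 - s)) (Ioi r) :=
    integrableOn_Ioi_rpow_of_lt (by linarith) hr
  refine ((integrable_indicator_iff measurableSet_Ioi).2 hpow).integrableOn.congr_fun
    (fun t (ht : 0 < t) => ?_) measurableSet_Ioi
  by_cases htr : t ∈ Ioi r
  · simp only [indicator_of_mem htr, smul_eq_mul]
    rw [← Real.rpow_natCast, ← Real.rpow_add ht, Nat.cast_sub hd]
    ring_nf
  · simp [indicator_of_notMem htr]

lemma integrable_energyKernel [Nontrivial E] (K : ℝ) {β : ℝ}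
    (hβ : β ∈ Ioo (finrank ℝ E : ℝ) (finrank ℝ E + 2)) :
    Integrable (energyKernel K β : E → ℝ) μ := by
  have hmeas : AEStronglyMeasurable (energyKernel K β) μ := by
    unfold energyKernel; fun_prop
  have hnorm : ∀ z : E, ‖energyKernel K β z‖ = energyKernel K β z :=
    fun z => Real.norm_of_nonneg (energyKernel_nonneg K β z)
  have hnear : IntegrableOn (energyKernel K β) (ball 0 2) μ := by
    refine integrableOn_ball_of_norm_le_rpow (C := K ^ 2) (α := β - 2) finrank_pos
      (by linarith [hβ.2]) (ae_of_all _ fun z => ?_) hmeas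
    rw [hnorm]
    rcases eq_or_ne z 0 with rfl | hz
    · simp [energyKernel, Real.zero_rpow (by linarith [hβ.1] : -β ≠ 0)]
      positivity
    · have hz' : 0 < ‖z‖ := norm_pos_iff.2 hz
      calc energyKernel K β z ≤ K ^ 2 * ‖z‖ ^ 2 * ‖z‖ ^ (-β) :=
            mul_le_mul_of_nonneg_right (min_le_left _ _) (by positivity)
        _ = K ^ 2 * ‖z‖ ^ (-(β - 2)) := by
            rw [mul_assoc, ← Real.rpow_two ‖z‖, ← Real.rpow_add hz']; ring_nf
  have hfar : IntegrableOn (energyKernel K β) (closedBall 0 1)ᶜ μ := by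
    refine (integrableOn_norm_rpow_neg_compl_closedBall μ hβ.1 one_pos).mono' hmeas.restrict
      (ae_of_all _ fun z => ?_)
    rw [hnorm]
    exact mul_le_of_le_one_left (by positivity) (min_le_right _ _)
  refine integrableOn_univ.1 ((hnear.union hfar).mono_set fun z _ => ?_)
  by_cases hz : ‖z‖ ≤ 1
  · exact Or.inl (mem_ball_zero_iff.2 (by linarith))
  · exact Or.inr (by simpa using hz)

lemma integral_sq_sub_div_le_integral_energyKernel [Nontrivial E] {f : E → ℝ} {K β : ℝ}
    (h01 : ∀ x, f x ∈ Icc (0 : ℝ) 1) (hLip : ∀ x y, |f x - f y| ≤ K * ‖x - y‖)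
    (hβ : β ∈ Ioo (finrank ℝ E : ℝ) (finrank ℝ E + 2)) (x : E) :
    ∫ y, (f x - f y) ^ 2 / ‖x - y‖ ^ β ∂μ ≤ ∫ z, energyKernel K β z ∂μ :=
  calc ∫ y, (f x - f y) ^ 2 / ‖x - y‖ ^ β ∂μ ≤ ∫ y, energyKernel K β (y - x) ∂μ :=
        integral_mono_of_nonneg (ae_of_all _ fun y => by positivity)
          ((integrable_energyKernel μ K hβ).comp_sub_right x)
          (ae_of_all _ (sq_sub_div_norm_rpow_le_energyKernel h01 hLip β x))
    _ = ∫ z, energyKernel K β z ∂μ := integral_sub_right_eq_self _ x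

lemma integral_sq_sub_div_le_of_far {f : E → ℝ} {R β : ℝ} (h01 : ∀ x, f x ∈ Icc (0 : ℝ) 1)
    (hsupp : ∀ x, R ≤ ‖x‖ → f x = 0) (hR : 0 < R) (hβ : 0 ≤ β) {x : E} (hx : 2 * R ≤ ‖x‖) :
    ∫ y, (f x - f y) ^ 2 / ‖x - y‖ ^ β ∂μ ≤ μ.real (closedBall 0 R) * 2 ^ β * ‖x‖ ^ (-β) :=
  calc ∫ y, (f x - f y) ^ 2 / ‖x - y‖ ^ β ∂μ
      ≤ ∫ y, (closedBall 0 R).indicator (fun _ => 2 ^ β * ‖x‖ ^ (-β)) y ∂μ :=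
        integral_mono_of_nonneg (ae_of_all _ fun y => by positivity)
          ((integrable_indicator_iff measurableSet_closedBall).2
            (integrableOn_const measure_closedBall_lt_top.ne))
          (ae_of_all _ (sq_sub_div_norm_rpow_le_indicator_of_far h01 hsupp hR hβ hx))
    _ = μ.real (closedBall 0 R) * 2 ^ β * ‖x‖ ^ (-β) := by
        rw [integral_indicator_const _ measurableSet_closedBall, smul_eq_mul, mul_assoc]

lemma exists_integral_integral_sq_sub_div_le [Nontrivial E] (K : ℝ) {R β : ℝ} (hR : 0 < R)
    (hβ : β ∈ Ioo (finrank ℝ E : ℝ) (finrank ℝ E + 2)) :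
    ∃ C, ∀ f : E → ℝ, (∀ x, f x ∈ Icc (0 : ℝ) 1) → (∀ x, R ≤ ‖x‖ → f x = 0) →
      (∀ x y, |f x - f y| ≤ K * ‖x - y‖) →
      ∫ x, ∫ y, (f x - f y) ^ 2 / ‖x - y‖ ^ β ∂μ ∂μ ≤ C := by
  classical
  have hβ0 : 0 ≤ β := le_trans (Nat.cast_nonneg _) hβ.1.le
  set G : E → ℝ := (closedBall 0 (2 * R)).piecewise (fun _ => ∫ z, energyKernel K β z ∂μ)
    fun x => μ.real (closedBall 0 R) * 2 ^ β * ‖x‖ ^ (-β) with hG_def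
  have hG : Integrable G μ :=
    Integrable.piecewise measurableSet_closedBall
      (integrableOn_const measure_closedBall_lt_top.ne)
      ((integrableOn_norm_rpow_neg_compl_closedBall μ hβ.1 (by positivity)).const_mul _)
  refine ⟨∫ x, G x ∂μ, fun f h01 hsupp hLip => integral_mono_of_nonneg
    (ae_of_all _ fun x => integral_nonneg fun y => by positivity) hG (ae_of_all _ fun x => ?_)⟩
  by_cases hx : x ∈ closedBall (0 : E) (2 * R)
  · rw [hG_def, piecewise_eq_of_mem _ _ _ hx]
    exact integral_sq_sub_div_le_integral_energyKernel μ h01 hLip hβ x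
  · rw [hG_def, piecewise_eq_of_notMem _ _ _ hx]
    exact integral_sq_sub_div_le_of_far μ h01 hsupp hR hβ0
      (not_le.1 (mt mem_closedBall_zero_iff.2 hx)).le

lemma integral_integral_comp_inv_smul (F : E → E → ℝ) {c : ℝ} (hc : 0 ≤ c) :
    ∫ x, ∫ y, F (c⁻¹ • x) (c⁻¹ • y) ∂μ ∂μ = c ^ (2 * finrank ℝ E) * ∫ x, ∫ y, F x y ∂μ ∂μ := by
  simp_rw [Measure.integral_comp_inv_smul_of_nonneg μ (F _) hc, integral_smul,
    Measure.integral_comp_inv_smul_of_nonneg μ (fun u => ∫ y, F u y ∂μ) hc, smul_eq_mul]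
  ring

end HaarMeasure

lemma fracD_comp_inv_smul (d : ℕ) (α : ℝ) (g : EuclideanSpace ℝ (Fin d) → ℝ) {c : ℝ}
    (hc : 0 < c) : fracD d α (fun x => g (c⁻¹ • x)) = c ^ ((d : ℝ) - α) * fracD d α g := by
  have hintegrand : ∀ x y : EuclideanSpace ℝ (Fin d),
      (g (c⁻¹ • x) - g (c⁻¹ • y)) ^ 2 / ‖x - y‖ ^ ((d : ℝ) + α) = c ^ (-((d : ℝ) + α)) *
        ((g (c⁻¹ • x) - g (c⁻¹ • y)) ^ 2 / ‖c⁻¹ • x - c⁻¹ • y‖ ^ ((d : ℝ) + α)) := by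
    intro x y
    rw [← smul_sub, norm_smul, Real.norm_of_nonneg (inv_nonneg.2 hc.le),
      Real.mul_rpow (inv_nonneg.2 hc.le) (norm_nonneg _), Real.inv_rpow hc.le,
      Real.rpow_neg hc.le, div_eq_mul_inv, div_eq_mul_inv, mul_inv, inv_inv]
    have : c ^ ((d : ℝ) + α) ≠ 0 := (Real.rpow_pos_of_pos hc _).ne'
    field_simp
  unfold fracD
  simp_rw [hintegrand, integral_const_mul]
  rw [integral_integral_comp_inv_smul volume
    (fun u v => (g u - g v) ^ 2 / ‖u - v‖ ^ ((d : ℝ) + α)) hc.le, finrank_euclideanSpace_fin,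
    ← mul_assoc, ← Real.rpow_natCast, ← Real.rpow_add hc]
  congr 2
  push_cast
  ring

theorem energy_of_cutoff_general
    (d : ℕ) (hd : 1 ≤ d) (α : ℝ) (hα : α ∈ Set.Ioo (0 : ℝ) 2)
    (K : ℝ) :
    ∃ C > (0 : ℝ), ∀ l : ℝ, 1 ≤ l →
      ∀ f : EuclideanSpace ℝ (Fin d) → ℝ,
        (∀ x, f x ∈ Set.Icc (0 : ℝ) 1) →
        (∀ x : EuclideanSpace ℝ (Fin d), 2 * l ≤ ‖x‖ → f x = 0) →
        (∀ x y : EuclideanSpace ℝ (Fin d), |f x - f y| ≤ (K / l) * ‖x - y‖) →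
        fracD d α f ≤ C * l ^ ((d : ℝ) - α) := by
  have : Nontrivial (EuclideanSpace ℝ (Fin d)) :=
    Module.nontrivial_of_finrank_pos (R := ℝ) (by rw [finrank_euclideanSpace_fin]; omega)
  have hβ : (d : ℝ) + α ∈ Ioo (finrank ℝ (EuclideanSpace ℝ (Fin d)) : ℝ)
      (finrank ℝ (EuclideanSpace ℝ (Fin d)) + 2) := by
    rw [finrank_euclideanSpace_fin]; constructor <;> linarith [hα.1, hα.2]
  obtain ⟨C, hC⟩ := exists_integral_integral_sq_sub_div_le volume K two_pos hβ
  refine ⟨max C 1, by positivity, fun l hl f h01 hsupp hLip => ?_⟩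
  have hl0 : 0 < l := by linarith
  set g : EuclideanSpace ℝ (Fin d) → ℝ := fun w => f (l • w)
  have hf : f = fun x => g (l⁻¹ • x) := by
    funext x; simp only [g, smul_inv_smul₀ hl0.ne']
  have hg : fracD d α g ≤ C := by
    refine hC g (fun w => h01 _) (fun w hw => hsupp _ ?_) (fun w v => ?_)
    · rw [norm_smul, Real.norm_of_nonneg hl0.le]; nlinarith
    · calc |g w - g v| ≤ K / l * ‖l • w - l • v‖ := hLip _ _
        _ = K * ‖w - v‖ := by
          rw [← smul_sub, norm_smul, Real.norm_of_nonneg hl0.le]; field_simp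
  calc fracD d α f = l ^ ((d : ℝ) - α) * fracD d α g := by
        rw [hf, fracD_comp_inv_smul d α g hl0]
    _ ≤ max C 1 * l ^ ((d : ℝ) - α) := by
        rw [mul_comm]; gcongr; exact hg.trans (le_max_left _ _)

theorem energy_of_cutoff
    (d : ℕ) (hd : 1 ≤ d) (α : ℝ) (hα : α ∈ Set.Ioo (0 : ℝ) 2)
    (K : ℝ) (hK : 0 < K) :
    ∃ C > (0 : ℝ), ∀ l : ℝ, 1 ≤ l →
      ∀ f : EuclideanSpace ℝ (Fin d) → ℝ,
        (∀ x, f x ∈ Set.Icc (0 : ℝ) 1) →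
        (∀ x : EuclideanSpace ℝ (Fin d), 2 * l ≤ ‖x‖ → f x = 0) →
        (∀ x y : EuclideanSpace ℝ (Fin d), |f x - f y| ≤ (K / l) * ‖x - y‖) →
        fracD d α f ≤ C * l ^ ((d : ℝ) - α) :=
  energy_of_cutoff_general d hd α hα K
end

section
/- Let γ > 0 and c > 0, and suppose that for all u ∈ C_c^∞(ℝ^d): ( ∫_{ℝ^d} u² dμ )^{1 + 1/γ} ≤ c·D(u,u)·( ∫_{ℝ^d} |u(x)|·(1 + |x|)^{α−d} μ(dx) )^{2/γ}. Then for every λ > 0 and every u ∈ C_c^∞(ℝ^d): λ^{β − α − (d + β − 2α)/γ}·( ∫_{ℝ^d} u²(x)·(λ + |x|)^{−β} dx )^{1 + 1/γ} ≤ c·D(u,u)·( ∫_{ℝ^d} |u(x)|·(λ + |x|)^{−(β + d − α)} dx )^{2/γ}. -/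
open MeasureTheory

theorem nash_inequality_scaling
    (d : ℕ) (α β : ℝ) (hα : α ∈ Set.Ioo (0 : ℝ) 2) (hd : α < d)
    (hβ₁ : α < β) (hβ₂ : β < 2 * α)
    (γ c : ℝ) (hγ : 0 < γ) (hc : 0 < c)
    (hNash : ∀ u : EuclideanSpace ℝ (Fin d) → ℝ,
      ContDiff ℝ (⊤ : ℕ∞) u → HasCompactSupport u →
        (∫ x, (u x) ^ 2 * (1 + ‖x‖) ^ (-β)) ^ (1 + 1 / γ) ≤
          c * fracD d α u *
            (∫ x, |u x| * (1 + ‖x‖) ^ (α - (d : ℝ)) * (1 + ‖x‖) ^ (-β))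
              ^ (2 / γ)) :
    ∀ lam : ℝ, 0 < lam →
      ∀ u : EuclideanSpace ℝ (Fin d) → ℝ, ContDiff ℝ (⊤ : ℕ∞) u → HasCompactSupport u →
        lam ^ (β - α - ((d : ℝ) + β - 2 * α) / γ) *
            (∫ x, (u x) ^ 2 * (lam + ‖x‖) ^ (-β)) ^ (1 + 1 / γ) ≤
          c * fracD d α u *
            (∫ x, |u x| * (lam + ‖x‖) ^ (-(β + (d : ℝ) - α))) ^ (2 / γ) := by
  intro lam hlam u hu hsupp
  have hγ' : γ ≠ 0 := ne_of_gt hγ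
  -- the rescaled function
  set v : EuclideanSpace ℝ (Fin d) → ℝ := fun x => u (lam • x) with hv
  have hvc : ContDiff ℝ (⊤ : ℕ∞) v := hu.comp (contDiff_const_smul lam)
  have hvs : HasCompactSupport v := hsupp.comp_smul (ne_of_gt hlam)
  -- generic scaling of integrals under x ↦ lam • x
  have hscale : ∀ f : EuclideanSpace ℝ (Fin d) → ℝ,
      ∫ x, f (lam • x) = lam ^ (-(d : ℝ)) * ∫ x, f x := by
    intro f
    rw [Measure.integral_comp_smul_of_nonneg volume f lam (hR := hlam.le)]
    rw [smul_eq_mul, finrank_euclideanSpace_fin, ← Real.rpow_natCast lam d,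
      ← Real.rpow_neg hlam.le]
  have hpow : ∀ (x : EuclideanSpace ℝ (Fin d)) (s : ℝ),
      (lam + ‖lam • x‖) ^ s = lam ^ s * (1 + ‖x‖) ^ s := by
    intro x s
    rw [norm_smul, Real.norm_eq_abs, abs_of_pos hlam,
      show lam + lam * ‖x‖ = lam * (1 + ‖x‖) by ring,
      Real.mul_rpow hlam.le (by positivity)]
  have hone : ∀ s : ℝ, lam ^ s * lam ^ (-s) = 1 := by
    intro s; rw [← Real.rpow_add hlam]; simp
  -- scaling of the first integral
  have hA : (∫ x, (v x) ^ 2 * (1 + ‖x‖) ^ (-β)) =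
      lam ^ (β - (d : ℝ)) * ∫ x, (u x) ^ 2 * (lam + ‖x‖) ^ (-β) := by
    have h1 : ∀ x : EuclideanSpace ℝ (Fin d), (v x) ^ 2 * (1 + ‖x‖) ^ (-β) =
        lam ^ β * ((u (lam • x)) ^ 2 * (lam + ‖lam • x‖) ^ (-β)) := by
      intro x
      simp only [hv]
      rw [hpow x (-β), show lam ^ β * (u (lam • x) ^ 2 * (lam ^ (-β) * (1 + ‖x‖) ^ (-β))) =
        (lam ^ β * lam ^ (-β)) * (u (lam • x) ^ 2 * (1 + ‖x‖) ^ (-β)) by ring, hone, one_mul]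
    calc (∫ x, (v x) ^ 2 * (1 + ‖x‖) ^ (-β))
        = ∫ x, lam ^ β * ((u (lam • x)) ^ 2 * (lam + ‖lam • x‖) ^ (-β)) :=
          integral_congr_ae (Filter.Eventually.of_forall h1)
      _ = lam ^ β * ∫ x, (u (lam • x)) ^ 2 * (lam + ‖lam • x‖) ^ (-β) :=
          integral_const_mul _ _
      _ = lam ^ β * (lam ^ (-(d : ℝ)) * ∫ x, (u x) ^ 2 * (lam + ‖x‖) ^ (-β)) := by
          exact congrArg (lam ^ β * ·) (hscale (fun y => (u y) ^ 2 * (lam + ‖y‖) ^ (-β)))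
      _ = lam ^ (β - (d : ℝ)) * ∫ x, (u x) ^ 2 * (lam + ‖x‖) ^ (-β) := by
          rw [← mul_assoc, ← Real.rpow_add hlam, show β + -(d : ℝ) = β - (d : ℝ) by ring]
  -- scaling of the second integral
  have hB : (∫ x, |v x| * (1 + ‖x‖) ^ (α - (d : ℝ)) * (1 + ‖x‖) ^ (-β)) =
      lam ^ (β - α) * ∫ x, |u x| * (lam + ‖x‖) ^ (-(β + (d : ℝ) - α)) := by
    have h1 : ∀ x : EuclideanSpace ℝ (Fin d),
        |v x| * (1 + ‖x‖) ^ (α - (d : ℝ)) * (1 + ‖x‖) ^ (-β) =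
        lam ^ (β + (d : ℝ) - α) *
          (|u (lam • x)| * (lam + ‖lam • x‖) ^ (-(β + (d : ℝ) - α))) := by
      intro x
      simp only [hv]
      have hb : (0 : ℝ) < 1 + ‖x‖ := by positivity
      rw [mul_assoc, ← Real.rpow_add hb,
        show α - (d : ℝ) + -β = -(β + (d : ℝ) - α) by ring,
        hpow x (-(β + (d : ℝ) - α)),
        show lam ^ (β + (d : ℝ) - α) * (|u (lam • x)| *
            (lam ^ (-(β + (d : ℝ) - α)) * (1 + ‖x‖) ^ (-(β + (d : ℝ) - α)))) =
          (lam ^ (β + (d : ℝ) - α) * lam ^ (-(β + (d : ℝ) - α))) *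
            (|u (lam • x)| * (1 + ‖x‖) ^ (-(β + (d : ℝ) - α))) by ring, hone, one_mul]
    calc (∫ x, |v x| * (1 + ‖x‖) ^ (α - (d : ℝ)) * (1 + ‖x‖) ^ (-β))
        = ∫ x, lam ^ (β + (d : ℝ) - α) *
            (|u (lam • x)| * (lam + ‖lam • x‖) ^ (-(β + (d : ℝ) - α))) :=
          integral_congr_ae (Filter.Eventually.of_forall h1)
      _ = lam ^ (β + (d : ℝ) - α) *
            ∫ x, |u (lam • x)| * (lam + ‖lam • x‖) ^ (-(β + (d : ℝ) - α)) :=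
          integral_const_mul _ _
      _ = lam ^ (β + (d : ℝ) - α) *
            (lam ^ (-(d : ℝ)) * ∫ x, |u x| * (lam + ‖x‖) ^ (-(β + (d : ℝ) - α))) := by
          exact congrArg (lam ^ (β + (d : ℝ) - α) * ·)
            (hscale (fun y => |u y| * (lam + ‖y‖) ^ (-(β + (d : ℝ) - α))))
      _ = lam ^ (β - α) * ∫ x, |u x| * (lam + ‖x‖) ^ (-(β + (d : ℝ) - α)) := by
          rw [← mul_assoc, ← Real.rpow_add hlam,
            show β + (d : ℝ) - α + -(d : ℝ) = β - α by ring]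
  -- scaling of the Dirichlet form
  have hD : fracD d α v = lam ^ (α - (d : ℝ)) * fracD d α u := by
    have hpt : ∀ x y : EuclideanSpace ℝ (Fin d),
        (v x - v y) ^ 2 / ‖x - y‖ ^ ((d : ℝ) + α) =
        lam ^ ((d : ℝ) + α) *
          ((u (lam • x) - u (lam • y)) ^ 2 / ‖lam • x - lam • y‖ ^ ((d : ℝ) + α)) := by
      intro x y
      have hn : ‖lam • x - lam • y‖ ^ ((d : ℝ) + α) =
          lam ^ ((d : ℝ) + α) * ‖x - y‖ ^ ((d : ℝ) + α) := by
        rw [← smul_sub, norm_smul, Real.norm_eq_abs, abs_of_pos hlam,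
          Real.mul_rpow hlam.le (norm_nonneg _)]
      rw [hn, mul_div_assoc']
      rw [mul_div_mul_left _ _ (ne_of_gt (Real.rpow_pos_of_pos hlam _))]
    have hinner : ∀ x : EuclideanSpace ℝ (Fin d),
        (∫ y, (v x - v y) ^ 2 / ‖x - y‖ ^ ((d : ℝ) + α)) =
        (lam ^ ((d : ℝ) + α) * lam ^ (-(d : ℝ))) *
          ((fun a => ∫ y, (u a - u y) ^ 2 / ‖a - y‖ ^ ((d : ℝ) + α)) (lam • x)) := by
      intro x
      calc (∫ y, (v x - v y) ^ 2 / ‖x - y‖ ^ ((d : ℝ) + α))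
          = ∫ y, lam ^ ((d : ℝ) + α) *
              ((u (lam • x) - u (lam • y)) ^ 2 / ‖lam • x - lam • y‖ ^ ((d : ℝ) + α)) :=
            integral_congr_ae (Filter.Eventually.of_forall fun y => hpt x y)
        _ = lam ^ ((d : ℝ) + α) *
              ∫ y, (u (lam • x) - u (lam • y)) ^ 2 / ‖lam • x - lam • y‖ ^ ((d : ℝ) + α) :=
            integral_const_mul _ _
        _ = lam ^ ((d : ℝ) + α) * (lam ^ (-(d : ℝ)) *
              ∫ y, (u (lam • x) - u y) ^ 2 / ‖lam • x - y‖ ^ ((d : ℝ) + α)) := by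
            exact congrArg (lam ^ ((d : ℝ) + α) * ·)
              (hscale (fun b => (u (lam • x) - u b) ^ 2 / ‖lam • x - b‖ ^ ((d : ℝ) + α)))
        _ = (lam ^ ((d : ℝ) + α) * lam ^ (-(d : ℝ))) *
              ((fun a => ∫ y, (u a - u y) ^ 2 / ‖a - y‖ ^ ((d : ℝ) + α)) (lam • x)) := by
            ring
    calc fracD d α v
        = ∫ x, (lam ^ ((d : ℝ) + α) * lam ^ (-(d : ℝ))) *
            ((fun a => ∫ y, (u a - u y) ^ 2 / ‖a - y‖ ^ ((d : ℝ) + α)) (lam • x)) :=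
          integral_congr_ae (Filter.Eventually.of_forall hinner)
      _ = (lam ^ ((d : ℝ) + α) * lam ^ (-(d : ℝ))) *
            ∫ x, (fun a => ∫ y, (u a - u y) ^ 2 / ‖a - y‖ ^ ((d : ℝ) + α)) (lam • x) :=
          integral_const_mul _ _
      _ = (lam ^ ((d : ℝ) + α) * lam ^ (-(d : ℝ))) * (lam ^ (-(d : ℝ)) * fracD d α u) := by
          exact congrArg ((lam ^ ((d : ℝ) + α) * lam ^ (-(d : ℝ))) * ·)
            (hscale (fun a => ∫ y, (u a - u y) ^ 2 / ‖a - y‖ ^ ((d : ℝ) + α)))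
      _ = lam ^ (α - (d : ℝ)) * fracD d α u := by
          rw [← Real.rpow_add hlam, ← mul_assoc, ← Real.rpow_add hlam,
            show (d : ℝ) + α + -(d : ℝ) + -(d : ℝ) = α - (d : ℝ) by ring]
  -- apply the Nash hypothesis to v and rewrite
  have hN := hNash v hvc hvs
  rw [hA, hB, hD] at hN
  set A := ∫ x, (u x) ^ 2 * (lam + ‖x‖) ^ (-β) with hAdef
  set B := ∫ x, |u x| * (lam + ‖x‖) ^ (-(β + (d : ℝ) - α)) with hBdef
  set D := fracD d α u with hDdef
  have hA0 : 0 ≤ A := integral_nonneg fun x => by positivity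
  have hB0 : 0 ≤ B := integral_nonneg fun x => by positivity
  -- expand the powers of lam in hN
  rw [Real.mul_rpow (Real.rpow_nonneg hlam.le _) hA0,
    Real.mul_rpow (Real.rpow_nonneg hlam.le _) hB0,
    ← Real.rpow_mul hlam.le, ← Real.rpow_mul hlam.le] at hN
  set p := 1 + 1 / γ with hp
  set q := 2 / γ with hq
  set L1 := (β - (d : ℝ)) * p with hL1
  set L2 := (α - (d : ℝ)) + (β - α) * q with hL2
  have he : (β - α - ((d : ℝ) + β - 2 * α) / γ) + L2 = L1 := by
    rw [hL1, hL2, hp, hq]; field_simp; ring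
  have key : lam ^ L1 * A ^ p ≤ (c * D * B ^ q) * lam ^ L2 := by
    calc lam ^ L1 * A ^ p
        ≤ c * (lam ^ (α - (d : ℝ)) * D) * (lam ^ ((β - α) * q) * B ^ q) := hN
      _ = (c * D * B ^ q) * (lam ^ (α - (d : ℝ)) * lam ^ ((β - α) * q)) := by ring
      _ = (c * D * B ^ q) * lam ^ L2 := by rw [← Real.rpow_add hlam]
  have hL2pos : (0 : ℝ) < lam ^ L2 := Real.rpow_pos_of_pos hlam _
  have heq : lam ^ (β - α - ((d : ℝ) + β - 2 * α) / γ) * A ^ p =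
      (lam ^ L1 * A ^ p) / lam ^ L2 := by
    rw [← he, Real.rpow_add hlam]
    field_simp
  rw [heq]
  exact (div_le_iff₀ hL2pos).2 key
end
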